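/- arXiv:2512.03714 — 2 statements merged into one kernel-verified Lean document; each statement's English description precedes it below -/
import Mathlib

section
/- Let g, h be natural numbers with g ≥ 3 and 1 ≤ h ≤ g − 2, and set A = (2h+1)(2h+2) and c = g. Define real sequences K_m = A^m (4g − 4) − (2h² + h)·∑_{i=0}^{m−1} A^i and χ_m = (1/2)(A^m c − (h² + h)·∑_{i=0}^{m−1} A^i). Then the sequence of slopes λ_m = K_m/χ_m is strictly increasing in m. -/
/-!
Write `S_m = ∑_{i<m} A^i`. Both `K_m` and `2χ_m` have the shape `p A^m - q S_m`, and since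
`(A^m, S_m) ↦ (A^{m+1}, S_{m+1}) = (A·A^m, A·S_m + 1)` the determinant `A^m S_{m+1} - A^{m+1} S_m`
equals `A^m`. Hence the cross-difference `K_{m+1} χ_m - K_m χ_{m+1}` is `(1/2)(ad - bc) A^m` for the
coefficients `(a, b) = (4g - 4, 2h² + h)`, `(c, d) = (g, h² + h)`, and
`ad - bc = h((2h + 3)g - 4h - 4) > 0`. The denominators are positive because `d ≤ A - 1`, so that
`d S_m ≤ (A - 1) S_m = A^m - 1`.
-/

open Finset

section LinGeom

variable {R : Type*}

def linGeom [CommRing R] (A p q : R) (m : ℕ) : R :=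
  p * A ^ m - q * ∑ i ∈ range m, A ^ i

theorem linGeom_succ_mul_sub_mul_succ [CommRing R] (A a b c d : R) (m : ℕ) :
    linGeom A a b (m + 1) * linGeom A c d m - linGeom A a b m * linGeom A c d (m + 1)
      = (a * d - b * c) * A ^ m := by
  simp only [linGeom, geom_sum_succ, pow_succ]
  ring

variable [Field R] [LinearOrder R] [IsStrictOrderedRing R]

theorem linGeom_pos {A p q : R} (hA : 0 ≤ A) (hp : 0 < p) (hq : q ≤ (A - 1) * p) (m : ℕ) :
    0 < linGeom A p q m := by
  have hS : 0 ≤ ∑ i ∈ range m, A ^ i := sum_nonneg fun i _ => pow_nonneg hA i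
  rw [linGeom, sub_pos]
  calc q * ∑ i ∈ range m, A ^ i
      ≤ (A - 1) * p * ∑ i ∈ range m, A ^ i := mul_le_mul_of_nonneg_right hq hS
    _ = p * A ^ m - p := by linear_combination p * geom_sum_mul A m
    _ < p * A ^ m := sub_lt_self _ hp

theorem strictMono_linGeom_div {A a b c d : R} (hA : 0 < A) (hc : 0 < c)
    (hd : d ≤ (A - 1) * c) (hbc : b * c < a * d) :
    StrictMono fun m => linGeom A a b m / linGeom A c d m := by
  refine strictMono_nat_of_lt_succ fun m => ?_
  rw [div_lt_div_iff₀ (linGeom_pos hA.le hc hd m) (linGeom_pos hA.le hc hd (m + 1)),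
    ← sub_pos, linGeom_succ_mul_sub_mul_succ]
  exact mul_pos (sub_pos.mpr hbc) (pow_pos hA m)

end LinGeom

open Finset in
theorem iterated_slope_strictMono_general (g h : ℕ) (hg : 3 ≤ g) (hh1 : 1 ≤ h)
    (A : ℝ) (hA : A = (2 * (h : ℝ) + 1) * (2 * (h : ℝ) + 2))
    (K χ : ℕ → ℝ)
    (hK : ∀ m, K m = A ^ m * (4 * (g : ℝ) - 4)
          - (2 * (h : ℝ) ^ 2 + (h : ℝ)) * ∑ i ∈ range m, A ^ i)
    (hχ : ∀ m, χ m = (1 / 2) * (A ^ m * (g : ℝ)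
          - ((h : ℝ) ^ 2 + (h : ℝ)) * ∑ i ∈ range m, A ^ i)) :
    StrictMono (fun m => K m / χ m) := by
  have hh : (1 : ℝ) ≤ h := by exact_mod_cast hh1
  have hg3 : (3 : ℝ) ≤ g := by exact_mod_cast hg
  have hslope : (fun m => K m / χ m) = fun m =>
      2 * (linGeom A (4 * g - 4) (2 * h ^ 2 + h) m / linGeom A g (h ^ 2 + h) m) := by
    funext m
    rw [hK, hχ, linGeom, linGeom, mul_comm (A ^ m), mul_comm (A ^ m)]
    field_simp
  have hdet : (2 * (h : ℝ) ^ 2 + h) * g < (4 * g - 4) * (h ^ 2 + h) := by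
    nlinarith [mul_le_mul hh hg3 (by norm_num) (by positivity)]
  rw [hslope]
  refine (strictMono_linGeom_div (by rw [hA]; positivity) (by positivity) ?_ hdet).const_mul two_pos
  rw [hA]
  nlinarith

open Finset in
/-- In the even-genus case (`c = g`) the slopes `λ_m = K_m/χ_m` of the iterated
construction form a strictly increasing sequence. -/
theorem iterated_slope_strictMono (g h : ℕ) (hg : 3 ≤ g) (hh1 : 1 ≤ h) (hh2 : h ≤ g - 2)
    (A : ℝ) (hA : A = (2 * (h : ℝ) + 1) * (2 * (h : ℝ) + 2))
    (K χ : ℕ → ℝ)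
    (hK : ∀ m, K m = A ^ m * (4 * (g : ℝ) - 4)
          - (2 * (h : ℝ) ^ 2 + (h : ℝ)) * ∑ i ∈ range m, A ^ i)
    (hχ : ∀ m, χ m = (1 / 2) * (A ^ m * (g : ℝ)
          - ((h : ℝ) ^ 2 + (h : ℝ)) * ∑ i ∈ range m, A ^ i)) :
    StrictMono (fun m => K m / χ m) :=
  iterated_slope_strictMono_general g h hg hh1 A hA K χ hK hχ
end

section
/- Let g ≥ 2 be a real number and define F: ℝ → ℝ by F(x) = 2((16g − 18)x² + (24g − 25)x + 4(g − 1)) / ((4g − 1)x² + (6g − 1)x + g). Set x₀ = (2(g − 2) + √(4g² + 5g − 12))/7. Then x₀ > 0 and F(x) ≤ F(x₀) for every x ≥ 0; that is, F attains its maximum on [0, ∞) at x₀. -/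
/-!
Write `F = N / D`. With `s = √(4g² + 5g − 12)` and `x₀ = (2(g − 2) + s)/7`, the cross difference
`N(x₀) D(x) − N(x) D(x₀)` is the perfect square `2 s (x − x₀)²`; since `D > 0` on `[0, ∞)`,
this gives `F x ≤ F x₀` there.
-/

namespace LimitSlope

def num (g x : ℝ) : ℝ := 2 * ((16 * g - 18) * x ^ 2 + (24 * g - 25) * x + 4 * (g - 1))

def den (g x : ℝ) : ℝ := (4 * g - 1) * x ^ 2 + (6 * g - 1) * x + g

noncomputable def crit (g s : ℝ) : ℝ := (2 * (g - 2) + s) / 7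

lemma den_pos {g x : ℝ} (hg : 1 / 4 ≤ g) (hx : 0 ≤ x) : 0 < den g x := by
  have hx2 : 0 ≤ (4 * g - 1) * x ^ 2 := mul_nonneg (by linarith) (sq_nonneg x)
  have hx1 : 0 ≤ (6 * g - 1) * x := mul_nonneg (by linarith) hx
  unfold den
  linarith

/-- Holds for either square root `s`; its sign decides whether `crit g s` is a maximum or a
minimum of `num g / den g`. -/
lemma num_crit_mul_den_sub_num_mul_den_crit {g s : ℝ} (hs : s ^ 2 = 4 * g ^ 2 + 5 * g - 12)
    (x : ℝ) :
    num g (crit g s) * den g x - num g x * den g (crit g s) = 2 * s * (x - crit g s) ^ 2 := by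
  unfold num den crit
  linear_combination (2 / 49 : ℝ) * (4 + 7 * x - s - 2 * g) * hs

lemma num_div_den_le_crit {g s x : ℝ} (hg : 1 / 4 ≤ g) (hs₀ : 0 ≤ s)
    (hs : s ^ 2 = 4 * g ^ 2 + 5 * g - 12) (hx : 0 ≤ x) (hcrit : 0 ≤ crit g s) :
    num g x / den g x ≤ num g (crit g s) / den g (crit g s) := by
  rw [div_le_div_iff₀ (den_pos hg hx) (den_pos hg hcrit), ← sub_nonneg,
    num_crit_mul_den_sub_num_mul_den_crit hs]
  positivity

end LimitSlope

open LimitSlope in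
/-- For `g ≥ 2`, the limiting-slope function (even-genus case) attains its
maximum on `[0, ∞)` at `x₀ = (2(g − 2) + √(4g² + 5g − 12))/7`. -/
theorem limit_slope_max_even (g : ℝ) (hg : 2 ≤ g)
    (F : ℝ → ℝ)
    (hF : ∀ x, F x = 2 * ((16 * g - 18) * x ^ 2 + (24 * g - 25) * x + 4 * (g - 1)) /
      ((4 * g - 1) * x ^ 2 + (6 * g - 1) * x + g))
    (x₀ : ℝ) (hx₀ : x₀ = (2 * (g - 2) + Real.sqrt (4 * g ^ 2 + 5 * g - 12)) / 7) :
    0 < x₀ ∧ ∀ x, 0 ≤ x → F x ≤ F x₀ := by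
  set s := Real.sqrt (4 * g ^ 2 + 5 * g - 12)
  have hs : s ^ 2 = 4 * g ^ 2 + 5 * g - 12 := Real.sq_sqrt (by nlinarith)
  have hs_pos : 0 < s := Real.sqrt_pos.2 (by nlinarith)
  replace hx₀ : x₀ = crit g s := hx₀
  have hx₀_pos : 0 < x₀ := by rw [hx₀, crit]; linarith
  have hF' : ∀ x, F x = num g x / den g x := hF
  refine ⟨hx₀_pos, fun x hx => ?_⟩
  rw [hF', hF', hx₀]
  exact num_div_den_le_crit (by linarith) hs_pos.le hs hx (hx₀ ▸ hx₀_pos.le)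
end
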